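/- Let A be a positive definite symmetric n×n real matrix and B a symmetric n×n matrix. Define the inner product ⟨A,B⟩_A = tr(A⁻¹ B A⁻¹ · A) = tr(A⁻¹ B) and |B|²_A = tr(A⁻¹ B A⁻¹ B). Then there exist ε > 0 and C > 0 such that for all B with appropriate smallness (|B|_A < ε) and all τ ∈ [0,1]: √det(A + τB) ≥ √det(A) · (1 + (1/2)τ·tr(A⁻¹B) − (1/4)τ²·|B|²_A − C·ε·τ³·|B|²_A). -/

import Mathlib

open Matrix Finset


private lemma log_lb {x : ℝ} (hx : |x| ≤ 1/2) :
    x - x^2/2 - 2*|x|^3 ≤ Real.log (1+x) := by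
  have h1 : |(-x : ℝ)| < 1 := by rw [abs_neg]; linarith [abs_nonneg x]
  have h := Real.abs_log_sub_add_sum_range_le h1 2
  have hs : (∑ i ∈ range 2, (-x) ^ (i + 1) / (i + 1)) = -x + x^2/2 := by
    simp [Finset.sum_range_succ]; ring
  rw [hs, abs_neg, sub_neg_eq_add] at h
  have h2 : |x| ^ 3 / (1 - |x|) ≤ 2 * |x|^3 := by
    rw [div_le_iff₀ (by linarith)]
    nlinarith [pow_nonneg (abs_nonneg x) 3, abs_nonneg x]
  linarith [(abs_le.mp h).1]

private lemma sqrt_eq_exp_half {y : ℝ} (hy : 0 < y) :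
    Real.sqrt y = Real.exp (Real.log y / 2) := by
  have h : Real.exp (Real.log y / 2) ^ 2 = y := by
    rw [sq, ← Real.exp_add, add_halves, Real.exp_log hy]
  conv_lhs => rw [← h]
  rw [Real.sqrt_sq (Real.exp_pos _).le]

/-- Pointwise determinant inequality (Croke–Dairbekov–Sharafutdinov).
For `A` positive definite symmetric and `B` symmetric with `|B|_A` small, and all
`τ ∈ [0,1]`:
`√det(A + τB) ≥ √det(A)·(1 + (1/2)τ tr(A⁻¹B) − (1/4)τ²|B|²_A − Cετ³|B|²_A)`,
where `|B|²_A = tr(A⁻¹BA⁻¹B)`. -/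
theorem sqrt_det_expansion (n : ℕ) (A : Matrix (Fin n) (Fin n) ℝ)
    (hA : A.PosDef) (hAsymm : A.IsSymm) :
    ∃ ε > (0 : ℝ), ∃ C > (0 : ℝ), ∀ B : Matrix (Fin n) (Fin n) ℝ, B.IsSymm →
      Real.sqrt ((A⁻¹ * B * A⁻¹ * B).trace) < ε →
      ∀ τ : ℝ, τ ∈ Set.Icc (0 : ℝ) 1 →
        Real.sqrt A.det *
          (1 + (1 / 2) * τ * (A⁻¹ * B).trace
            - (1 / 4) * τ ^ 2 * (A⁻¹ * B * A⁻¹ * B).trace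
            - C * ε * τ ^ 3 * (A⁻¹ * B * A⁻¹ * B).trace)
        ≤ Real.sqrt (A + τ • B).det := by
  refine ⟨1/2, by norm_num, 1, by norm_num, ?_⟩
  intro B hBsymm hsmall τ hτ
  obtain ⟨hτ0, hτ1⟩ := hτ
  have hdetA : 0 < A.det := hA.det_pos
  set S := (open scoped MatrixOrder in CFC.sqrt A) with hSdef
  have hSS : S * S = A := by
    open scoped MatrixOrder in exact CFC.sqrt_mul_sqrt_self A hA.posSemidef.nonneg
  have hSdet : S.det ≠ 0 := by
    intro h
    have : A.det = 0 := by rw [← hSS, det_mul, h, mul_zero]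
    exact hdetA.ne' this
  have hSi : S⁻¹ * S = 1 := nonsing_inv_mul _ (Ne.isUnit hSdet)
  have hSi' : S * S⁻¹ = 1 := mul_nonsing_inv _ (Ne.isUnit hSdet)
  have hAinv : A⁻¹ = S⁻¹ * S⁻¹ := by rw [← hSS, Matrix.mul_inv_rev]
  set M := S⁻¹ * B * S⁻¹ with hMdef
  have hSh : S.IsHermitian := by
    open scoped MatrixOrder in exact (CFC.sqrt_nonneg A).posSemidef.1
  have hBh : B.IsHermitian := by
    show Bᴴ = B
    rw [conjTranspose]
    rw [hBsymm.eq]; ext i j; simp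
  have hM : M.IsHermitian := by
    show Mᴴ = M
    rw [hMdef]
    simp only [conjTranspose_mul, hSh.inv.eq, hBh.eq, mul_assoc]
  -- trace identities
  have ht : (A⁻¹ * B).trace = M.trace := by
    rw [hAinv, hMdef]
    exact (trace_mul_cycle _ _ _).symm
  have hs' : (A⁻¹ * B * A⁻¹ * B).trace = (M * M).trace := by
    rw [hAinv, hMdef]
    have e1 : S⁻¹ * S⁻¹ * B * (S⁻¹ * S⁻¹) * B
        = (S⁻¹) * (S⁻¹ * B * S⁻¹ * (S⁻¹ * B)) := by simp only [mul_assoc]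
    have e2 : (S⁻¹ * B * S⁻¹) * (S⁻¹ * B * S⁻¹)
        = (S⁻¹ * B * S⁻¹ * (S⁻¹ * B)) * S⁻¹ := by simp only [mul_assoc]
    rw [e1, e2, trace_mul_comm]
  -- factorization of A + τ B
  have hSMS : S * M * S = B := by
    have e : S * (S⁻¹ * B * S⁻¹) * S = (S * S⁻¹) * B * (S⁻¹ * S) := by
      simp only [mul_assoc]
    rw [hMdef, e, hSi', hSi, one_mul, mul_one]
  have hfact : A + τ • B = S * (1 + τ • M) * S := by
    rw [mul_add, mul_one, add_mul, hSS, Matrix.mul_smul, Matrix.smul_mul, hSMS]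
  have hdet : (A + τ • B).det = A.det * (1 + τ • M).det := by
    rw [hfact, det_mul, det_mul, ← hSS, det_mul]
    ring
  -- spectral data
  set U : Matrix (Fin n) (Fin n) ℝ := (hM.eigenvectorUnitary : Matrix (Fin n) (Fin n) ℝ)
    with hUdef
  set lam := hM.eigenvalues with hlamdef
  have hU1 : U * star U = 1 := mem_unitaryGroup_iff.mp hM.eigenvectorUnitary.2
  have hU2 : star U * U = 1 := mem_unitaryGroup_iff'.mp hM.eigenvectorUnitary.2
  have hspec : M = U * diagonal lam * star U := by
    have := hM.spectral_theorem
    rwa [RCLike.ofReal_real_eq_id, Function.id_comp] at this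
  set t := ∑ i, lam i with htdef
  set s := ∑ i, (lam i)^2 with hsdef
  have htr1 : M.trace = t := by
    conv_lhs => rw [hspec]
    rw [trace_mul_cycle, hU2, one_mul, trace_diagonal]
  have htr2 : (M * M).trace = s := by
    have hMM : M * M = U * diagonal (fun i => lam i ^ 2) * star U := by
      conv_lhs => rw [hspec]
      have e : (U * diagonal lam * star U) * (U * diagonal lam * star U)
          = U * (diagonal lam * (star U * U) * diagonal lam) * star U := by
        simp only [mul_assoc]
      rw [e, hU2, mul_one, diagonal_mul_diagonal]
      congr 1
      ext i
      simp [sq]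
    rw [hMM, trace_mul_cycle, hU2, one_mul, trace_diagonal]
  have hdet1 : (1 + τ • M).det = ∏ i, (1 + τ * lam i) := by
    have h1 : (1 : Matrix (Fin n) (Fin n) ℝ) + τ • M
        = U * diagonal (fun i => 1 + τ * lam i) * star U := by
      have h2 : diagonal (fun i : Fin n => 1 + τ * lam i)
          = 1 + τ • diagonal lam := by
        rw [← diagonal_one, ← diagonal_smul, ← diagonal_add]
        rfl
      rw [h2, mul_add, add_mul, mul_one, hU1, Matrix.mul_smul, Matrix.smul_mul]
      conv_lhs => rw [hspec]
    rw [h1, det_mul, det_mul, mul_comm, ← mul_assoc, ← det_mul, hU2, det_one, one_mul,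
      det_diagonal]
  -- analytic estimates
  have hs0 : 0 ≤ s := Finset.sum_nonneg fun i _ => sq_nonneg _
  have hsmall' : Real.sqrt s < 1/2 := by rwa [hs', htr2] at hsmall
  have hlam : ∀ i, |lam i| ≤ Real.sqrt s := by
    intro i
    rw [← Real.sqrt_sq_eq_abs]
    exact Real.sqrt_le_sqrt (Finset.single_le_sum (fun j _ => sq_nonneg (lam j))
      (Finset.mem_univ i))
  have habs : ∀ i, |τ * lam i| ≤ 1/2 := by
    intro i
    rw [abs_mul, abs_of_nonneg hτ0]
    calc τ * |lam i| ≤ 1 * |lam i| := by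
          exact mul_le_mul_of_nonneg_right hτ1 (abs_nonneg _)
      _ = |lam i| := one_mul _
      _ ≤ Real.sqrt s := hlam i
      _ ≤ 1/2 := hsmall'.le
  have hpos : ∀ i, (0:ℝ) < 1 + τ * lam i := by
    intro i
    have := abs_le.mp (habs i)
    linarith [this.1]
  set L := ∑ i, Real.log (1 + τ * lam i) with hLdef
  have hprod : (∏ i, (1 + τ * lam i)) = Real.exp L := by
    rw [hLdef, Real.exp_sum]
    exact Finset.prod_congr rfl fun i _ => (Real.exp_log (hpos i)).symm
  have hL1 : τ*t - τ^2*s/2 - 2*(τ^3*(Real.sqrt s * s)) ≤ L := by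
    have hterm : ∀ i ∈ Finset.univ,
        τ*lam i - (τ*lam i)^2/2 - 2*(τ^3*(Real.sqrt s * (lam i)^2))
          ≤ Real.log (1 + τ * lam i) := by
      intro i _
      refine le_trans ?_ (log_lb (habs i))
      have hcube : |τ*lam i|^3 ≤ τ^3*(Real.sqrt s * (lam i)^2) := by
        have h3 : |lam i|^3 = |lam i| * (lam i)^2 := by
          rw [pow_succ, sq_abs]; ring
        rw [abs_mul, abs_of_nonneg hτ0, mul_pow, h3]
        have h2 : |lam i| * (lam i)^2 ≤ Real.sqrt s * (lam i)^2 :=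
          mul_le_mul_of_nonneg_right (hlam i) (sq_nonneg _)
        exact mul_le_mul_of_nonneg_left h2 (pow_nonneg hτ0 3)
      linarith
    have hsum := Finset.sum_le_sum hterm
    have hsplit : (∑ i, (τ*lam i - (τ*lam i)^2/2 - 2*(τ^3*(Real.sqrt s * (lam i)^2))))
        = τ*t - τ^2*s/2 - 2*(τ^3*(Real.sqrt s * s)) := by
      rw [Finset.sum_sub_distrib, Finset.sum_sub_distrib]
      congr 1
      · congr 1
        · rw [← Finset.mul_sum]
        · simp only [mul_pow, ← Finset.sum_div, ← Finset.mul_sum, hsdef]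
      · simp only [← Finset.mul_sum, hsdef]
    rw [hsplit] at hsum
    exact hsum
  have hL : τ*t - τ^2*s/2 - τ^3*s ≤ L := by
    have hkey : (0:ℝ) ≤ (τ^3 * s) * (1 - 2*Real.sqrt s) :=
      mul_nonneg (mul_nonneg (pow_nonneg hτ0 3) hs0) (by linarith)
    nlinarith [hL1]
  -- conclusion
  have hRHS : Real.sqrt (A + τ • B).det = Real.sqrt A.det * Real.exp (L/2) := by
    rw [hdet, hdet1, hprod, Real.sqrt_mul hdetA.le, sqrt_eq_exp_half (Real.exp_pos L),
      Real.log_exp]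
  rw [hRHS, ht, hs', htr1, htr2]
  refine mul_le_mul_of_nonneg_left ?_ (Real.sqrt_nonneg _)
  have hexp : L/2 + 1 ≤ Real.exp (L/2) := Real.add_one_le_exp _
  linarith
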